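/- arXiv:2309.08908 — 7 statements merged into one kernel-verified Lean document; each statement's English description precedes it below -/
import Mathlib

section
/- The set M of all Lebesgue-measurable functions f : I → ℝ is sequentially closed in the topology of pointwise convergence (if each f_n is measurable and f_n(x) → f(x) for every x ∈ I, then f is measurable), but M is not a closed subset of the space of all functions I → ℝ with the product topology. -/
open MeasureTheory Filter Topology Cardinal

local notation "I" => Set.Icc (0:ℝ) 1

lemma exists_nonmeasurable : ∃ s : Set (Set.Icc (0:ℝ) 1), ¬ MeasurableSet s := by
  by_contra h
  push_neg at h
  obtain ⟨b, bc, hb⟩ :=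
    MeasurableSpace.CountablyGenerated.isCountablyGenerated (α := I)
  have hcard : #{ t | @MeasurableSet I (MeasurableSpace.generateFrom b) t } ≤ 𝔠 :=
    MeasurableSpace.cardinal_measurableSet_le_continuum
      (bc.le_aleph0.trans aleph0_le_continuum)
  rw [← hb] at hcard
  have huniv : { t : Set I | MeasurableSet t } = Set.univ := by
    ext t; simp [h t]
  rw [huniv] at hcard
  have h1 : #(Set I) ≤ 𝔠 := by simpa using hcard
  have h2 : #(Set I) = 2 ^ (𝔠 : Cardinal) := by
    rw [mk_set, mk_Icc_real (by norm_num : (0:ℝ) < 1)]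
  have := Cardinal.cantor (𝔠 : Cardinal)
  rw [← h2] at this
  exact absurd (this.trans_le h1) (lt_irrefl _)

lemma nonmeasurable_fun : ∃ g : Set.Icc (0:ℝ) 1 → ℝ, ¬ Measurable g := by
  obtain ⟨s, hs⟩ := exists_nonmeasurable
  refine ⟨s.indicator (fun _ => 1), fun hg => hs ?_⟩
  have : s = s.indicator (fun _ : I => (1:ℝ)) ⁻¹' {1} := by
    ext x
    simp [Set.indicator_apply]
  rw [this]
  exact hg (measurableSet_singleton 1)

theorem stmt1 :
    (∀ f : ℕ → ((Set.Icc (0:ℝ) 1) → ℝ), (∀ n, Measurable (f n)) →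
      ∀ g : (Set.Icc (0:ℝ) 1) → ℝ,
        (∀ x, Tendsto (fun n => f n x) atTop (𝓝 (g x))) → Measurable g) ∧
    ¬ IsClosed {f : (Set.Icc (0:ℝ) 1) → ℝ | Measurable f} := by
  constructor
  · intro f hf g hg
    exact measurable_of_tendsto_metrizable hf (tendsto_pi_nhds.2 hg)
  · intro hcl
    obtain ⟨g, hg⟩ := nonmeasurable_fun
    apply hg
    have : g ∈ closure {f : I → ℝ | Measurable f} := by
      rw [mem_closure_iff_nhds]
      intro U hU
      rw [nhds_pi, Filter.mem_pi] at hU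
      obtain ⟨J, hJfin, t, ht, hsub⟩ := hU
      classical
      set F : Finset I := hJfin.toFinset with hF
      refine ⟨fun x => ∑ a ∈ F, ({a} : Set I).indicator (fun _ => g a) x, ?_, ?_⟩
      · apply hsub
        intro i hi
        have hiF : i ∈ F := hJfin.mem_toFinset.2 hi
        have : (∑ a ∈ F, ({a} : Set I).indicator (fun _ => g a) i) = g i := by
          rw [Finset.sum_eq_single i]
          · simp
          · intro a _ ha
            simp only [Set.indicator_apply, Set.mem_singleton_iff]
            rw [if_neg (fun h => ha h.symm)]
          · intro h; exact absurd hiF h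
        simpa only [this] using mem_of_mem_nhds (ht i)
      · exact Finset.measurable_sum _ fun a _ =>
          measurable_const.indicator (measurableSet_singleton a)
    exact hcl.closure_subset this
end

section
/- There is no topology τ on the space of λ-a.e.-equivalence classes of measurable functions I → ℝ (the type I →ₘ[λ] ℝ of MeasureTheory.AEEqFun) such that, for every sequence (F_n) in this space and every element G, the sequence (F_n) converges to G in τ if and only if for λ-almost every x ∈ I, F_n(x) → G(x). -/
open MeasureTheory Filter Topology

/-!
In any topology, a sequence converges to `G` as soon as each of its subsequences has a further
subsequence converging to `G`. Convergence in measure has exactly this relation to a.e.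
convergence, so a topology whose convergent sequences are the a.e. convergent ones would make
every sequence converging in measure converge a.e. The typewriter sequence, the indicators of
dyadic intervals sweeping `[0, 1]` again and again at ever finer scales, converges to `0` in
measure but at no point.
-/

theorem Set.not_tendsto_indicator_one_of_frequently_mem {α ι : Type*} {l : Filter ι}
    {s : ι → Set α} {x : α} (hx : ∃ᶠ i in l, x ∈ s i) :
    ¬ Tendsto (fun i => (s i).indicator (1 : α → ℝ) x) l (𝓝 0) := fun h =>
  (hx.and_eventually (h (Metric.ball_mem_nhds 0 one_pos))).exists.elim fun i ⟨hi, hball⟩ => by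
    simp [Set.indicator_of_mem hi] at hball

namespace MeasureTheory

variable {α E : Type*} [MeasurableSpace α] {μ : Measure α}

theorem AEEqFun.not_exists_topology_tendsto_iff_ae_of_tendstoInMeasure [PseudoEMetricSpace E]
    {f : ℕ → α → E} {g : α → E} (hf : ∀ n, AEStronglyMeasurable (f n) μ)
    (hg : AEStronglyMeasurable g μ) (hfg : TendstoInMeasure μ f atTop g)
    (hnot : ¬ ∀ᵐ x ∂μ, Tendsto (fun n => f n x) atTop (𝓝 (g x))) :
    ¬ ∃ τ : TopologicalSpace (α →ₘ[μ] E), ∀ (F : ℕ → α →ₘ[μ] E) (G : α →ₘ[μ] E),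
      Tendsto F atTop (@nhds _ τ G) ↔ ∀ᵐ x ∂μ, Tendsto (fun n => F n x) atTop (𝓝 (G x)) := by
  rintro ⟨τ, hτ⟩
  let F n := AEEqFun.mk (f n) (hf n)
  let G := AEEqFun.mk g hg
  have hcoe : ∀ᵐ x ∂μ, (∀ n, F n x = f n x) ∧ G x = g x :=
    (ae_all_iff.2 fun n => AEEqFun.coeFn_mk _ _).and (AEEqFun.coeFn_mk _ _)
  have tendsto_iff (ns : ℕ → ℕ) : Tendsto (F ∘ ns) atTop (@nhds _ τ G) ↔
      ∀ᵐ x ∂μ, Tendsto (fun i => f (ns i) x) atTop (𝓝 (g x)) := by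
    refine (hτ _ _).trans (eventually_congr ?_)
    filter_upwards [hcoe] with x ⟨hF, hG⟩
    simp only [Function.comp_apply, hF, hG]
  refine hnot ((tendsto_iff id).1 (tendsto_of_subseq_tendsto fun ns hns => ?_))
  obtain ⟨ms, -, hms⟩ := (hfg.comp hns).exists_seq_tendsto_ae
  exact ⟨ms, (tendsto_iff (ns ∘ ms)).2 hms⟩

theorem tendstoInMeasure_indicator_one {ι : Type*} {l : Filter ι} {s : ι → Set α}
    (hs : Tendsto (fun i => μ (s i)) l (𝓝 0)) :
    TendstoInMeasure μ (fun i => (s i).indicator (1 : α → ℝ)) l 0 := by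
  refine fun ε hε => tendsto_of_tendsto_of_tendsto_of_le_of_le tendsto_const_nhds hs
    (fun _ => zero_le) fun i => measure_mono fun x hx => ?_
  by_contra hxs
  simp [Set.indicator_of_notMem hxs, not_le.2 hε] at hx

end MeasureTheory

def dyadicInterval (m k : ℕ) : Set ℝ := Set.Icc (k / 2 ^ m) ((k + 1) / 2 ^ m)

lemma volume_dyadicInterval (m k : ℕ) :
    volume (dyadicInterval m k) = ENNReal.ofReal (1 / 2 ^ m) := by
  rw [dyadicInterval, Real.volume_Icc]
  congr 1
  ring

lemma exists_mem_dyadicInterval {x : ℝ} (hx : x ∈ Set.Icc (0:ℝ) 1) (m : ℕ) :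
    ∃ k < 2 ^ m, x ∈ dyadicInterval m k := by
  have h2m : (0:ℝ) < 2 ^ m := by positivity
  refine ⟨min ⌊x * 2 ^ m⌋₊ (2 ^ m - 1), by have := Nat.one_le_two_pow (n := m); omega, ?_, ?_⟩
  · rw [div_le_iff₀ h2m]
    exact (Nat.cast_le.2 (min_le_left _ _)).trans (Nat.floor_le (by have := hx.1; positivity))
  · rw [le_div_iff₀ h2m]
    rcases le_total ⌊x * 2 ^ m⌋₊ (2 ^ m - 1) with h | h
    · rw [min_eq_left h]; exact (Nat.lt_floor_add_one _).le
    · rw [min_eq_right h, Nat.cast_sub Nat.one_le_two_pow]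
      push_cast
      nlinarith [hx.2]

def typewriter (n : ℕ) : Set ℝ := dyadicInterval (Nat.log 2 n) (n - 2 ^ Nat.log 2 n)

lemma measurableSet_typewriter (n : ℕ) : MeasurableSet (typewriter n) := measurableSet_Icc

lemma typewriter_two_pow_add {m k : ℕ} (hk : k < 2 ^ m) :
    typewriter (2 ^ m + k) = dyadicInterval m k := by
  have hlog : Nat.log 2 (2 ^ m + k) = m :=
    Nat.log_eq_of_pow_le_of_lt_pow (Nat.le_add_right _ _) (by rw [pow_succ]; omega)
  rw [typewriter, hlog, Nat.add_sub_cancel_left]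

lemma frequently_mem_typewriter {x : ℝ} (hx : x ∈ Set.Icc (0:ℝ) 1) :
    ∃ᶠ n in atTop, x ∈ typewriter n := by
  refine frequently_atTop.2 fun N => ?_
  obtain ⟨k, hk, hxk⟩ := exists_mem_dyadicInterval hx N
  exact ⟨2 ^ N + k, (Nat.lt_two_pow_self).le.trans (Nat.le_add_right _ _),
    (typewriter_two_pow_add hk).symm ▸ hxk⟩

lemma tendsto_volume_typewriter : Tendsto (fun n => volume (typewriter n)) atTop (𝓝 0) := by
  have hlog : Tendsto (Nat.log 2) atTop atTop :=
    tendsto_atTop_atTop.2 fun b => ⟨2 ^ b, fun n => Nat.le_log_of_pow_le one_lt_two⟩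
  have hpow : Tendsto (fun m : ℕ => (1:ℝ) / 2 ^ m) atTop (𝓝 0) := by
    simpa only [one_div, inv_pow] using
      tendsto_pow_atTop_nhds_zero_of_lt_one (r := (2:ℝ)⁻¹) (by norm_num) (by norm_num)
  simp only [typewriter, volume_dyadicInterval]
  simpa [Function.comp_def] using (ENNReal.tendsto_ofReal hpow).comp hlog

theorem stmt4 :
    ¬ ∃ τ : TopologicalSpace ((Set.Icc (0:ℝ) 1) →ₘ[volume] ℝ),
      ∀ (F : ℕ → ((Set.Icc (0:ℝ) 1) →ₘ[volume] ℝ))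
        (G : (Set.Icc (0:ℝ) 1) →ₘ[volume] ℝ),
        Tendsto F atTop (@nhds _ τ G) ↔
          ∀ᵐ x ∂volume, Tendsto (fun n => F n x) atTop (𝓝 (G x)) := by
  let s n : Set (Set.Icc (0:ℝ) 1) := Subtype.val ⁻¹' typewriter n
  have hs n : MeasurableSet (s n) := measurable_subtype_coe (measurableSet_typewriter n)
  have hvol : Tendsto (fun n => volume (s n)) atTop (𝓝 0) := by
    refine tendsto_of_tendsto_of_tendsto_of_le_of_le tendsto_const_nhds tendsto_volume_typewriter
      (fun _ => zero_le) fun n => ?_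
    exact (volume_preimage_coe measurableSet_Icc.nullMeasurableSet
      (measurableSet_typewriter n)).trans_le (measure_mono Set.inter_subset_left)
  have : (ae (volume : Measure (Set.Icc (0:ℝ) 1))).NeBot :=
    ae_neBot.2 (IsProbabilityMeasure.ne_zero _)
  refine AEEqFun.not_exists_topology_tendsto_iff_ae_of_tendstoInMeasure
    (fun n => (measurable_const.indicator (hs n)).aestronglyMeasurable)
    aestronglyMeasurable_const (tendstoInMeasure_indicator_one hvol) fun h => ?_
  obtain ⟨x, hx⟩ := h.exists
  exact Set.not_tendsto_indicator_one_of_frequently_mem (frequently_mem_typewriter x.2) hx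
end

section
/- Let X be a type and let φ, ψ : ℕ → X be sequences such that Filter.map φ Filter.atTop ≤ Filter.map ψ Filter.atTop (every set containing a tail of ψ contains a tail of φ). Then there exists a strictly increasing function ρ : ℕ → ℕ such that Filter.map (ψ ∘ ρ) Filter.atTop = Filter.map φ Filter.atTop. -/
open Filter

theorem stmt7 {X : Type*} (φ ψ : ℕ → X)
    (h : Filter.map φ Filter.atTop ≤ Filter.map ψ Filter.atTop) :
    ∃ ρ : ℕ → ℕ, StrictMono ρ ∧
      Filter.map (ψ ∘ ρ) Filter.atTop = Filter.map φ Filter.atTop := by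
  classical
  -- For each n, eventually φ i lies in ψ '' Ici n
  have key : ∀ n : ℕ, ∃ N, ∀ i ≥ N, ∃ k ≥ n, ψ k = φ i := by
    intro n
    have h1 : ψ '' Set.Ici n ∈ Filter.map ψ Filter.atTop :=
      Filter.image_mem_map (Filter.Ici_mem_atTop n)
    have h2 : ψ '' Set.Ici n ∈ Filter.map φ Filter.atTop := h h1
    rw [Filter.mem_map, Filter.mem_atTop_sets] at h2
    obtain ⟨N, hN⟩ := h2
    exact ⟨N, fun i hi => by
      obtain ⟨k, hk1, hk2⟩ := hN i hi
      exact ⟨k, hk1, hk2⟩⟩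
  choose N hN using key
  -- choose a i : a large ψ-index whose value is φ i
  have main : ∀ i, ∃ k, N 0 ≤ i →
      (ψ k = φ i ∧ ∀ n, n ≤ i → N n ≤ i → n ≤ k) := by
    intro i
    by_cases hi : N 0 ≤ i
    · have hP : N (Nat.findGreatest (fun n => N n ≤ i) i) ≤ i :=
        Nat.findGreatest_spec (P := fun n => N n ≤ i) (Nat.zero_le i) hi
      obtain ⟨k, hk1, hk2⟩ := hN _ i hP
      exact ⟨k, fun _ => ⟨hk2, fun n hn1 hn2 =>
        le_trans (Nat.le_findGreatest (P := fun n => N n ≤ i) hn1 hn2) hk1⟩⟩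
    · exact ⟨0, fun hc => absurd hc hi⟩
  choose a ha using main
  have haψ : ∀ i, N 0 ≤ i → ψ (a i) = φ i := fun i hi => (ha i hi).1
  have hagrow : ∀ n i, max (max n (N n)) (N 0) ≤ i → n ≤ a i := by
    intro n i hi
    have h1 : n ≤ i := le_trans (le_trans (le_max_left _ _) (le_max_left _ _)) hi
    have h2 : N n ≤ i := le_trans (le_trans (le_max_right _ _) (le_max_left _ _)) hi
    have h0 : N 0 ≤ i := le_trans (le_max_right _ _) hi
    exact (ha i h0).2 n h1 h2
  have hatop : Filter.Tendsto a Filter.atTop Filter.atTop := by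
    apply Filter.tendsto_atTop.2
    intro b
    filter_upwards [Filter.eventually_ge_atTop (max (max b (N b)) (N 0))] with i hi
    exact hagrow b i hi
  -- the range of a is infinite
  have hinf : {k | k ∈ Set.range a}.Infinite := by
    apply Set.infinite_of_not_bddAbove
    rintro ⟨b, hb⟩
    obtain ⟨i, hi⟩ := (Filter.tendsto_atTop.1 hatop (b + 1)).exists
    have : a i ≤ b := hb ⟨i, rfl⟩
    omega
  set p : ℕ → Prop := fun k => k ∈ Set.range a with hp
  refine ⟨Nat.nth p, Nat.nth_strictMono hinf, ?_⟩
  have hρtop : Filter.Tendsto (Nat.nth p) Filter.atTop Filter.atTop :=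
    (Nat.nth_strictMono hinf).tendsto_atTop
  apply le_antisymm
  · -- every tail of ψ ∘ nth consists of values φ i for large i
    intro s hs
    rw [Filter.mem_map, Filter.mem_atTop_sets] at hs ⊢
    obtain ⟨m0, hm0⟩ := hs
    set M := max m0 (N 0) with hM
    set bound := (Finset.range M).sup a with hbound
    obtain ⟨T, hT⟩ := Filter.tendsto_atTop.1 hρtop (bound + 1) |>.exists_forall_of_atTop
    refine ⟨T, fun t ht => ?_⟩
    obtain ⟨i, hi⟩ : Nat.nth p t ∈ Set.range a := Nat.nth_mem_of_infinite hinf t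
    have hbig : bound + 1 ≤ a i := by rw [hi]; exact hT t ht
    have hiM : M ≤ i := by
      by_contra hcon
      push_neg at hcon
      have : a i ≤ bound := Finset.le_sup (Finset.mem_range.2 hcon)
      omega
    have : ψ (Nat.nth p t) = φ i := by rw [← hi]; exact haψ i (le_trans (le_max_right _ _) hiM)
    simpa [Set.mem_preimage, Function.comp, this] using hm0 i (le_trans (le_max_left _ _) hiM)
  · -- every tail of φ consists of values of ψ ∘ nth at large positions
    intro s hs
    rw [Filter.mem_map, Filter.mem_atTop_sets] at hs ⊢
    obtain ⟨T, hT⟩ := hs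
    obtain ⟨m, hm⟩ := (Filter.tendsto_atTop.1 hatop (Nat.nth p T)).exists_forall_of_atTop
    refine ⟨max m (N 0), fun i hi => ?_⟩
    have hpi : p (a i) := ⟨i, rfl⟩
    set t := Nat.count p (a i) with htdef
    have hnth : Nat.nth p t = a i := Nat.nth_count hpi
    have htT : T ≤ t := by
      have : Nat.nth p T ≤ Nat.nth p t := by
        rw [hnth]; exact hm i (le_trans (le_max_left _ _) hi)
      exact ((Nat.nth_strictMono hinf).le_iff_le).1 this
    have := hT t htT
    have hval : φ i = ψ (Nat.nth p t) := by
      rw [hnth]; exact (haψ i (le_trans (le_max_right _ _) hi)).symm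
    simpa [Set.mem_preimage, Function.comp, ← hval] using this
end

section
/- (Dominated Convergence Theorem for the Riemann integral.) Let f_n : ℝ → ℝ (n ∈ ℕ) each be Riemann integrable on [0,1] with Riemann integral y_n, let g : ℝ → ℝ be Riemann integrable on [0,1] with |f_n(x)| ≤ g(x) for every x ∈ [0,1] and every n, suppose f_n(x) → f(x) for every x ∈ [0,1], and assume f is Riemann integrable on [0,1] with Riemann integral y. Then y_n → y. -/
open MeasureTheory Filter Topology BoxIntegral

noncomputable def unitBox : BoxIntegral.Box (Fin 1) :=
  ⟨fun _ => 0, fun _ => 1, fun _ => one_pos⟩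

/-- `f : ℝ → ℝ` has Riemann integral `y` on `[0,1]`, in the sense of Mathlib's
box-integral theory with the Riemann integration parameters. -/
def HasRiemannIntegralOn01 (f : ℝ → ℝ) (y : ℝ) : Prop :=
  BoxIntegral.HasIntegral unitBox BoxIntegral.IntegrationParams.Riemann
    (fun x => f (x 0)) (volume : Measure (Fin 1 → ℝ)).toBoxAdditive.toSMul y

/-- `f : ℝ → ℝ` is Riemann integrable on `[0,1]`. -/
def RiemannIntegrableOn01 (f : ℝ → ℝ) : Prop :=
  BoxIntegral.Integrable unitBox BoxIntegral.IntegrationParams.Riemann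
    (fun x => f (x 0)) (volume : Measure (Fin 1 → ℝ)).toBoxAdditive.toSMul

open Set

theorem MeasureTheory.integrable_and_integral_eq_of_forall_approx {α : Type*} [MeasurableSpace α]
    {μ : Measure α} {f : α → ℝ} {y : ℝ}
    (hu : ∀ ε > 0, ∃ u, Integrable u μ ∧ f ≤ᵐ[μ] u ∧ ∫ x, u x ∂μ ≤ y + ε)
    (hl : ∀ ε > 0, ∃ l, Integrable l μ ∧ l ≤ᵐ[μ] f ∧ y - ε ≤ ∫ x, l x ∂μ) :
    Integrable f μ ∧ ∫ x, f x ∂μ = y := by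
  -- `⨅ n, u n` and `⨆ n, l n` squeeze `f` and both have integral `y`, so they agree a.e.
  choose u hui hfu hu using fun n : ℕ => hu (1 / (n + 1)) Nat.one_div_pos_of_nat
  choose l hli hlf hl using fun n : ℕ => hl (1 / (n + 1)) Nat.one_div_pos_of_nat
  set U := fun x => ⨅ n, u n x
  set L := fun x => ⨆ n, l n x
  have hsand : ∀ᵐ x ∂μ, (∀ n, l n x ≤ f x) ∧ ∀ n, f x ≤ u n x :=
    (ae_all_iff.2 hlf).and (ae_all_iff.2 hfu)
  have hLf : L ≤ᵐ[μ] f := hsand.mono fun x hx => ciSup_le hx.1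
  have hfU : f ≤ᵐ[μ] U := hsand.mono fun x hx => le_ciInf hx.2
  have hLU : L ≤ᵐ[μ] U := hLf.trans hfU
  have hUu : ∀ n, U ≤ᵐ[μ] u n := fun n =>
    hsand.mono fun x hx => ciInf_le ⟨f x, forall_mem_range.2 hx.2⟩ n
  have hlL : ∀ n, l n ≤ᵐ[μ] L := fun n =>
    hsand.mono fun x hx => le_ciSup ⟨f x, forall_mem_range.2 hx.1⟩ n
  have hUi : Integrable U μ :=
    integrable_of_le_of_le (AEMeasurable.iInf fun n => (hui n).aemeasurable).aestronglyMeasurable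
      ((hlL 0).trans hLU) (hUu 0) (hli 0) (hui 0)
  have hLi : Integrable L μ :=
    integrable_of_le_of_le (AEMeasurable.iSup fun n => (hli n).aemeasurable).aestronglyMeasurable
      (hlL 0) (hLU.trans (hUu 0)) (hli 0) (hui 0)
  have hUy : ∫ x, U x ∂μ ≤ y := by
    refine ge_of_tendsto' (by simpa using tendsto_one_div_add_atTop_nhds_zero_nat.const_add y)
      fun n => (integral_mono_ae hUi (hui n) (hUu n)).trans (hu n)
  have hyL : y ≤ ∫ x, L x ∂μ := by
    refine le_of_tendsto' (by simpa using tendsto_one_div_add_atTop_nhds_zero_nat.const_sub y)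
      fun n => (hl n).trans (integral_mono_ae (hli n) hLi (hlL n))
  have hLU_int : ∫ x, L x ∂μ = ∫ x, U x ∂μ :=
    le_antisymm (integral_mono_ae hLi hUi hLU) (hUy.trans hyL)
  have hUL : U - L =ᵐ[μ] 0 := by
    refine (integral_eq_zero_iff_of_nonneg_ae (hLU.mono fun x => sub_nonneg.2) (hUi.sub hLi)).1 ?_
    rw [integral_sub hUi hLi, hLU_int, sub_self]
  have hfU_eq : f =ᵐ[μ] U := by
    filter_upwards [hLf, hfU, hUL] with x h₁ h₂ h₃
    have : U x = L x := sub_eq_zero.1 h₃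
    linarith
  exact ⟨hUi.congr hfU_eq.symm, (integral_congr_ae hfU_eq).trans (le_antisymm hUy (hyL.trans hLU_int.le))⟩

namespace BoxIntegral

variable {ι : Type*} [Fintype ι] {I : Box ι} {f : (ι → ℝ) → ℝ} {y : ℝ}

theorem Box.volume_real_pos (J : Box ι) : 0 < volume.real (J : Set (ι → ℝ)) := by
  rw [measureReal_def, Box.volume_apply']
  exact Finset.prod_pos fun i _ => sub_pos.2 (J.lower_lt_upper i)

/-- The Riemann gauge is a constant `ρ`, so a partition into boxes of radius `ρ / 2` around
their tags stays `ρ`-fine after any change of tags. -/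
theorem HasIntegral.exists_isPartition_forall_abs_sum_sub_le
    (hf : HasIntegral I IntegrationParams.Riemann f (volume : Measure (ι → ℝ)).toBoxAdditive.toSMul y)
    {ε : ℝ} (hε : 0 < ε) :
    ∃ π : Prepartition I, π.IsPartition ∧ ∀ t : Box ι → ι → ℝ, (∀ J ∈ π, t J ∈ Box.Icc J) →
      |∑ J ∈ π.boxes, volume.real (J : Set (ι → ℝ)) * f (t J) - y| ≤ ε := by
  obtain ⟨r, hr, H⟩ := hasIntegral_iff.1 hf ε hε
  set ρ : ℝ := (r 0 0 : ℝ)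
  have hρ : ∀ x, (r 0 x : ℝ) = ρ := fun x => congrArg Subtype.val (hr 0 rfl x)
  obtain ⟨π₀, hπ₀, -, hsub, -⟩ := Box.exists_taggedPartition_isHenstock_isSubordinate_homothetic I
    fun _ => ⟨ρ / 2, mem_Ioi.2 (half_pos (r 0 0).2)⟩
  refine ⟨π₀.toPrepartition, hπ₀, fun t ht => ?_⟩
  classical
  let π : TaggedPrepartition I :=
    { π₀.toPrepartition with
      tag := fun J => if t J ∈ Box.Icc I then t J else I.upper
      tag_mem_Icc := fun J => by split_ifs with h; exacts [h, I.upper_mem_Icc] }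
  have htag : ∀ J ∈ π₀, π.tag J = t J := fun J hJ =>
    if_pos (Box.le_iff_Icc.1 (π₀.le_of_mem hJ) (ht J hJ))
  have hmem : IntegrationParams.Riemann.MemBaseSet I 0 (r 0) π := by
    refine ⟨fun J hJ x hx => ?_, fun _ J hJ => htag J hJ ▸ ht J hJ, nofun, nofun⟩
    rw [htag J hJ, Metric.mem_closedBall, hρ]
    calc dist x (t J) ≤ dist x (π₀.tag J) + dist (t J) (π₀.tag J) := dist_triangle_right _ _ _
      _ ≤ ρ / 2 + ρ / 2 := add_le_add (hsub J hJ hx) (hsub J hJ (ht J hJ))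
      _ = ρ := add_halves ρ
  have hπ := H 0 π hmem hπ₀
  rw [Real.dist_eq] at hπ
  convert hπ using 3
  refine Finset.sum_congr rfl fun J hJ => ?_
  rw [htag J hJ, BoxAdditiveMap.toSMul_apply, Measure.toBoxAdditive_apply, smul_eq_mul]

/-- Moving the tag of `J` alone changes the Riemann sum by `vol J * (f x - f J.upper)`, and every
Riemann sum is within `ε` of `y`. -/
theorem Prepartition.bddAbove_image_of_forall_abs_sum_sub_le {π : Prepartition I} {ε : ℝ}
    (hπ : ∀ t : Box ι → ι → ℝ, (∀ J ∈ π, t J ∈ Box.Icc J) →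
      |∑ J ∈ π.boxes, volume.real (J : Set (ι → ℝ)) * f (t J) - y| ≤ ε)
    {J : Box ι} (hJ : J ∈ π) : BddAbove (f '' J) := by
  classical
  refine ⟨f J.upper + 2 * ε / volume.real (J : Set (ι → ℝ)), forall_mem_image.2 fun x hxJ => ?_⟩
  have hupper : ∀ K ∈ π, K.upper ∈ Box.Icc K := fun K _ => K.upper_mem_Icc
  have hmoved : ∀ K ∈ π, Function.update Box.upper J x K ∈ Box.Icc K := by
    intro K _
    rcases eq_or_ne K J with rfl | hKJ
    · simp [Box.coe_subset_Icc hxJ]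
    · simp [hKJ, K.upper_mem_Icc]
  have hdiff : ∑ K ∈ π.boxes, volume.real (K : Set (ι → ℝ)) * f (Function.update Box.upper J x K) -
      ∑ K ∈ π.boxes, volume.real (K : Set (ι → ℝ)) * f K.upper =
      volume.real (J : Set (ι → ℝ)) * (f x - f J.upper) := by
    rw [← Finset.sum_sub_distrib, Finset.sum_eq_single_of_mem J hJ]
    · simp [mul_sub]
    · intro K _ hKJ
      simp [hKJ]
  have h₁ := abs_le.1 (hπ _ hmoved)
  have h₂ := abs_le.1 (hπ _ hupper)
  rw [← sub_le_iff_le_add', le_div_iff₀ J.volume_real_pos]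
  linarith

theorem HasIntegral.exists_integrableOn_le_setIntegral_le
    (hf : HasIntegral I IntegrationParams.Riemann f (volume : Measure (ι → ℝ)).toBoxAdditive.toSMul y)
    {ε : ℝ} (hε : 0 < ε) :
    ∃ u, IntegrableOn u I ∧ (∀ x ∈ I, f x ≤ u x) ∧ ∫ x in I, u x ≤ y + ε := by
  classical
  obtain ⟨π, hπ, hsum⟩ := hf.exists_isPartition_forall_abs_sum_sub_le (half_pos hε)
  have hbdd : ∀ J ∈ π, BddAbove (f '' J) := fun J hJ =>
    π.bddAbove_image_of_forall_abs_sum_sub_le hsum hJ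
  set S : Box ι → ℝ := fun J => sSup (f '' J)
  set u : (ι → ℝ) → ℝ := fun x => ∑ J ∈ π.boxes, (J : Set (ι → ℝ)).indicator (fun _ => S J) x
  have hu_eq : ∀ J ∈ π, ∀ x ∈ J, u x = S J := by
    intro J hJ x hxJ
    simp only [u]
    rw [Finset.sum_eq_single_of_mem J hJ fun K hK hKJ => indicator_of_notMem
      (fun hxK => (π.disjoint_coe_of_mem hK hJ hKJ).le_bot ⟨hxK, hxJ⟩) _]
    exact indicator_of_mem hxJ _
  have hfu : ∀ x ∈ I, f x ≤ u x := by
    intro x hx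
    obtain ⟨J, hJ, hxJ⟩ := hπ x hx
    rw [hu_eq J hJ x hxJ]
    exact le_csSup (hbdd J hJ) (mem_image_of_mem f hxJ)
  have hint : ∀ J ∈ π.boxes, IntegrableOn ((J : Set (ι → ℝ)).indicator fun _ => S J) I :=
    fun J _ => ((integrable_indicator_iff J.measurableSet_coe).2
      (integrableOn_const (J.measure_coe_lt_top _).ne)).integrableOn
  have hu_integral : ∫ x in I, u x = ∑ J ∈ π.boxes, volume.real (J : Set (ι → ℝ)) * S J := by
    rw [integral_finsetSum _ hint]
    refine Finset.sum_congr rfl fun J hJ => ?_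
    rw [integral_indicator_const _ J.measurableSet_coe, measureReal_restrict_apply J.measurableSet_coe,
      inter_eq_left.2 (Box.coe_subset_coe.2 (π.le_of_mem hJ)), smul_eq_mul]
  obtain ⟨η, hη, hηI⟩ : ∃ η > 0, η * volume.real (I : Set (ι → ℝ)) = ε / 2 :=
    ⟨_, div_pos (half_pos hε) I.volume_real_pos, div_mul_cancel₀ _ I.volume_real_pos.ne'⟩
  have hsup : ∀ J ∈ π, ∃ z ∈ (J : Set (ι → ℝ)), S J - η < f z := fun J hJ => by
    obtain ⟨_, ⟨z, hzJ, rfl⟩, hz⟩ :=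
      exists_lt_of_lt_csSup (J.nonempty_coe.image f) (sub_lt_self (S J) hη)
    exact ⟨z, hzJ, hz⟩
  choose! t htJ htS using hsup
  have hvol : ∑ J ∈ π.boxes, volume.real (J : Set (ι → ℝ)) = volume.real (I : Set (ι → ℝ)) := by
    rw [← π.measure_iUnion_toReal, hπ.iUnion_eq]
  refine ⟨u, integrable_finsetSum _ hint, hfu, ?_⟩
  calc ∫ x in I, u x
      ≤ ∑ J ∈ π.boxes, volume.real (J : Set (ι → ℝ)) * (f (t J) + η) := by
        rw [hu_integral]
        exact Finset.sum_le_sum fun J hJ =>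
          mul_le_mul_of_nonneg_left (by linarith [htS J hJ]) measureReal_nonneg
    _ = ∑ J ∈ π.boxes, volume.real (J : Set (ι → ℝ)) * f (t J) + ε / 2 := by
        rw [← hηI, ← hvol, Finset.mul_sum, ← Finset.sum_add_distrib]
        exact Finset.sum_congr rfl fun J _ => by ring
    _ ≤ y + ε := by
        linarith [(abs_le.1 (hsum t fun J hJ => Box.coe_subset_Icc (htJ J hJ))).2]

theorem HasIntegral.integrableOn_and_setIntegral_eq
    (hf : HasIntegral I IntegrationParams.Riemann f (volume : Measure (ι → ℝ)).toBoxAdditive.toSMul y) :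
    IntegrableOn f I ∧ ∫ x in I, f x = y := by
  refine integrable_and_integral_eq_of_forall_approx (fun ε hε => ?_) fun ε hε => ?_
  · obtain ⟨u, hu, hfu, hu_int⟩ := hf.exists_integrableOn_le_setIntegral_le hε
    exact ⟨u, hu, (ae_restrict_iff' I.measurableSet_coe).2 (.of_forall hfu), hu_int⟩
  · obtain ⟨u, hu, hfu, hu_int⟩ := hf.neg.exists_integrableOn_le_setIntegral_le hε
    refine ⟨-u, hu.neg, (ae_restrict_iff' I.measurableSet_coe).2 (.of_forall fun x hx => ?_), ?_⟩
    · exact neg_le.1 (hfu x hx)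
    · rw [integral_neg']
      linarith

theorem tendsto_of_dominated_convergence_riemann {f : ℕ → (ι → ℝ) → ℝ} {y : ℕ → ℝ}
    {g F : (ι → ℝ) → ℝ} {yF : ℝ}
    (hf : ∀ n, HasIntegral I IntegrationParams.Riemann (f n)
      (volume : Measure (ι → ℝ)).toBoxAdditive.toSMul (y n))
    (hg : Integrable I IntegrationParams.Riemann g (volume : Measure (ι → ℝ)).toBoxAdditive.toSMul)
    (hbound : ∀ n, ∀ x ∈ I, |f n x| ≤ g x) (hconv : ∀ x ∈ I, Tendsto (f · x) atTop (𝓝 (F x)))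
    (hF : HasIntegral I IntegrationParams.Riemann F
      (volume : Measure (ι → ℝ)).toBoxAdditive.toSMul yF) :
    Tendsto y atTop (𝓝 yF) := by
  have hfL := fun n => (hf n).integrableOn_and_setIntegral_eq
  rw [← hF.integrableOn_and_setIntegral_eq.2, ← funext fun n => (hfL n).2]
  exact tendsto_integral_of_dominated_convergence g (fun n => (hfL n).1.aestronglyMeasurable)
    hg.hasIntegral.integrableOn_and_setIntegral_eq.1
    (fun n => (ae_restrict_iff' I.measurableSet_coe).2 (.of_forall (hbound n)))
    ((ae_restrict_iff' I.measurableSet_coe).2 (.of_forall hconv))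

end BoxIntegral

theorem stmt11 (f : ℕ → ℝ → ℝ) (y : ℕ → ℝ)
    (hf : ∀ n, HasRiemannIntegralOn01 (f n) (y n))
    (g : ℝ → ℝ) (hg : RiemannIntegrableOn01 g)
    (hbound : ∀ n, ∀ x ∈ Set.Icc (0:ℝ) 1, |f n x| ≤ g x)
    (F : ℝ → ℝ)
    (hconv : ∀ x ∈ Set.Icc (0:ℝ) 1, Tendsto (fun n => f n x) atTop (𝓝 (F x)))
    (yF : ℝ) (hF : HasRiemannIntegralOn01 F yF) :
    Tendsto y atTop (𝓝 yF) := by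
  have hmem : ∀ x ∈ unitBox, x 0 ∈ Set.Icc (0:ℝ) 1 := fun x hx => Ioc_subset_Icc_self (hx 0)
  exact BoxIntegral.tendsto_of_dominated_convergence_riemann hf hg
    (fun n x hx => hbound n (x 0) (hmem x hx)) (fun x hx => hconv (x 0) (hmem x hx)) hF
end

section
/- With A and its indicator function G as in the context: for every function h : ℝ → ℝ such that h = G volume-almost everywhere, the set {x ∈ [0,1] : h is not continuous at x} has positive Lebesgue measure. -/
/-! The set `A ∩ (0, 1)` is open and dense in `(0, 1)`, since it contains every rational there,
yet `volume A ≤ ∑ ℓ / 2 ^ j = ℓ < 1`. At almost every point `x` of the positive-measure set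
`(0, 1) \ A` we have `h x = G x = 0`, while `h = 1` almost everywhere on the open set `A ∩ (0, 1)`,
whose points accumulate at `x`; as nonempty open sets have positive measure, `h` takes the value
`1` arbitrarily close to `x`, so it is not continuous there. -/

open MeasureTheory Filter Topology Set

section OpenPosMeasure

variable {X : Type*} [TopologicalSpace X] [MeasurableSpace X] {μ : Measure X} [μ.IsOpenPosMeasure]

theorem frequently_nhds_of_ae_imp_of_mem_closure {U : Set X} (hU : IsOpen U) {x : X}
    (hx : x ∈ closure U) {p : X → Prop} (hp : ∀ᵐ y ∂μ, y ∈ U → p y) : ∃ᶠ y in 𝓝 x, p y := by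
  rw [Filter.frequently_iff]
  intro V hV
  obtain ⟨W, hWV, hW, hxW⟩ := mem_nhds_iff.mp hV
  have hWU : (W ∩ U).Nonempty := mem_closure_iff.mp hx W hW hxW
  have hpos : μ ((W ∩ U) \ {y | ¬(y ∈ U → p y)}) ≠ 0 := by
    rw [measure_sdiff_null (ae_iff.mp hp)]
    exact (hW.inter hU).measure_ne_zero μ hWU
  obtain ⟨y, ⟨hyW, hyU⟩, hpy⟩ := nonempty_of_measure_ne_zero hpos
  exact ⟨y, hWV hyW, not_not.mp hpy hyU⟩

theorem not_continuousAt_of_ae_eq_const_on_open {Y : Type*} [TopologicalSpace Y] [T2Space Y]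
    {f : X → Y} {U : Set X} (hU : IsOpen U) {x : X} (hx : x ∈ closure U) {c : Y}
    (hf : ∀ᵐ y ∂μ, y ∈ U → f y = c) (hfx : f x ≠ c) : ¬ContinuousAt f x := fun hcont =>
  hfx <| tendsto_nhds_unique_of_frequently_eq hcont tendsto_const_nhds
    (frequently_nhds_of_ae_imp_of_mem_closure hU hx hf)

end OpenPosMeasure

theorem Ioo_subset_closure_of_rat_mem {a b : ℝ} {U : Set ℝ}
    (hU : ∀ r : ℚ, (r : ℝ) ∈ Ioo a b → (r : ℝ) ∈ U) : Ioo a b ⊆ closure U :=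
  (Rat.denseRange_cast.open_subset_closure_inter isOpen_Ioo).trans <|
    closure_mono fun _ ⟨hab, r, hr⟩ => hr ▸ hU r (hr ▸ hab)

theorem volume_biUnion_Ioo_geometric_le (c : ℕ → ℝ) {ℓ : ℝ} (hℓ : 0 ≤ ℓ) :
    volume (⋃ j ∈ {j : ℕ | 1 ≤ j}, Ioo (c j - ℓ / 2 ^ (j + 1)) (c j + ℓ / 2 ^ (j + 1))) ≤
      ENNReal.ofReal ℓ := by
  set S : ℕ → Set ℝ := fun j => Ioo (c j - ℓ / 2 ^ (j + 1)) (c j + ℓ / 2 ^ (j + 1))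
  have hshift : ⋃ j ∈ {j : ℕ | 1 ≤ j}, S j ⊆ ⋃ k, S (k + 1) := by
    simp only [mem_ofPred_eq, iUnion_subset_iff]
    intro j hj
    obtain ⟨k, rfl⟩ := Nat.exists_eq_add_of_le' hj
    exact subset_iUnion (fun k => S (k + 1)) k
  have hlen (k : ℕ) : volume (S (k + 1)) = ENNReal.ofReal (ℓ / 2 / 2 ^ k) := by
    simp only [S, Real.volume_Ioo]
    congr 1
    ring
  calc volume (⋃ j ∈ {j : ℕ | 1 ≤ j}, S j)
      ≤ ∑' k, volume (S (k + 1)) := (measure_mono hshift).trans (measure_iUnion_le _)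
    _ = ENNReal.ofReal (∑' k : ℕ, ℓ / 2 / 2 ^ k) := by
      simp only [hlen]
      exact (ENNReal.ofReal_tsum_of_nonneg (fun k => by positivity) (summable_geometric_two' ℓ)).symm
    _ = ENNReal.ofReal ℓ := by rw [tsum_geometric_two']

theorem stmt15 (q : ℕ → ℝ)
    (hq : Set.BijOn q {n : ℕ | 1 ≤ n} (Set.Icc (0:ℝ) 1 ∩ Set.range ((↑) : ℚ → ℝ)))
    (ℓ : ℝ) (hℓ : ℓ ∈ Set.Ioo (0:ℝ) 1)
    (I : ℕ → Set ℝ)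
    (hI : ∀ j, I j = Set.Icc (0:ℝ) 1 ∩ Set.Ioo (q j - ℓ / 2 ^ (j + 1)) (q j + ℓ / 2 ^ (j + 1)))
    (A : Set ℝ) (hA : A = ⋃ j ∈ {j : ℕ | 1 ≤ j}, I j)
    (G : ℝ → ℝ) (hG : G = Set.indicator A (fun _ => (1:ℝ))) :
    ∀ h : ℝ → ℝ, h =ᵐ[volume] G →
      0 < volume {x | x ∈ Set.Icc (0:ℝ) 1 ∧ ¬ ContinuousAt h x} := by
  intro h hh
  set V := ⋃ j ∈ {j : ℕ | 1 ≤ j}, Ioo (q j - ℓ / 2 ^ (j + 1)) (q j + ℓ / 2 ^ (j + 1))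
  have hAV : A ⊆ V := by
    rw [hA]
    exact biUnion_mono subset_rfl fun j _ => (hI j).trans_subset inter_subset_right
  have hVA : Ioo 0 1 ∩ V ⊆ A := by
    simp only [V, hA, hI, inter_iUnion₂]
    exact biUnion_mono subset_rfl fun j _ => inter_subset_inter_left _ Ioo_subset_Icc_self
  have hV_dense : Ioo 0 1 ⊆ closure (Ioo 0 1 ∩ V) := by
    refine Ioo_subset_closure_of_rat_mem fun r hr => ⟨hr, ?_⟩
    obtain ⟨j, hj, hqj⟩ := hq.surjOn ⟨Ioo_subset_Icc_self hr, r, rfl⟩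
    have hrad : 0 < ℓ / 2 ^ (j + 1) := div_pos hℓ.1 (by positivity)
    exact mem_biUnion hj ⟨by linarith, by linarith⟩
  have hgap : 0 < volume (Ioo 0 1 \ A) := calc
    0 < volume (Ioo (0 : ℝ) 1) - ENNReal.ofReal ℓ := by
      simpa [Real.volume_Ioo] using hℓ.2
    _ ≤ volume (Ioo (0 : ℝ) 1) - volume A := by
      gcongr
      exact (measure_mono hAV).trans (volume_biUnion_Ioo_geometric_le q hℓ.1.le)
    _ ≤ volume (Ioo 0 1 \ A) := le_measure_sdiff
  have hU_open : IsOpen (Ioo 0 1 ∩ V) := isOpen_Ioo.inter (isOpen_biUnion fun j _ => isOpen_Ioo)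
  have hh_one : ∀ᵐ y, y ∈ Ioo 0 1 ∩ V → h y = 1 := by
    filter_upwards [hh] with y hy hyU
    rw [hy, hG, indicator_of_mem (hVA hyU)]
  refine hgap.trans_le ?_
  rw [← measure_sdiff_null (ae_iff.mp hh)]
  refine measure_mono ?_
  rintro x ⟨⟨hx, hxA⟩, hhx⟩
  have hhx_ne : h x ≠ 1 := by
    rw [not_not.mp hhx, hG, indicator_of_notMem hxA]
    exact zero_ne_one
  exact ⟨Ioo_subset_Icc_self hx,
    not_continuousAt_of_ae_eq_const_on_open hU_open (hV_dense hx) hh_one hhx_ne⟩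
end

section
/- Let B be a set of measurable functions I → ℝ. The following are equivalent: (i) for every sequence (f_n) of elements of B and every sequence (a_n) of real numbers converging to 0, the sequence (a_n • f_n) converges a.e. to 0, i.e. for λ-almost every x ∈ I, a_n · f_n(x) → 0; (ii) there exists a nonnegative measurable function g : I → ℝ such that for every f ∈ B, |f(x)| ≤ g(x) for λ-almost every x ∈ I. -/
open MeasureTheory Filter Topology
open scoped ENNReal

noncomputable def phi (t : ENNReal) : ENNReal := 1 - (t+1)⁻¹

lemma phi_mono : Monotone phi := by
  intro a b h
  exact tsub_le_tsub_left (ENNReal.inv_le_inv.2 (by gcongr)) 1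

lemma phi_le_one (t : ENNReal) : phi t ≤ 1 := tsub_le_self

lemma phi_inj : Function.Injective phi := by
  intro a b h
  have ha : (a+1)⁻¹ ≤ 1 := by
    rw [ENNReal.inv_le_one]; exact le_add_self
  have hb : (b+1)⁻¹ ≤ 1 := by
    rw [ENNReal.inv_le_one]; exact le_add_self
  have heq : (a+1)⁻¹ = (b+1)⁻¹ := by
    have h1 : 1 - (1 - (a+1)⁻¹) = (a+1)⁻¹ := ENNReal.sub_sub_cancel ENNReal.one_ne_top ha
    have h2 : 1 - (1 - (b+1)⁻¹) = (b+1)⁻¹ := ENNReal.sub_sub_cancel ENNReal.one_ne_top hb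
    rw [← h1, ← h2]; unfold phi at h; rw [h]
  have h2 : a + 1 = b + 1 := by
    have := congrArg Inv.inv heq; rwa [inv_inv, inv_inv] at this
  exact (ENNReal.add_left_inj ENNReal.one_ne_top).1 h2

lemma phi_measurable : Measurable phi := by
  unfold phi
  exact (measurable_id.add_const 1).inv.const_sub 1


lemma pieceA (w : ℕ → (Set.Icc (0:ℝ) 1) → ℝ) (hw : ∀ n, Measurable (w n))
    (H : ∀ a : ℕ → ℝ, Tendsto a atTop (𝓝 0) →
      ∀ᵐ x ∂volume, Tendsto (fun n => a n * w n x) atTop (𝓝 (0:ℝ))) :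
    ∀ᵐ x ∂(volume : Measure (Set.Icc (0:ℝ) 1)), (⨆ n, ENNReal.ofReal |w n x|) ≠ ∞ := by
  set μ : Measure (Set.Icc (0:ℝ) 1) := volume with hμ
  set G : (Set.Icc (0:ℝ) 1) → ENNReal := fun x => ⨆ n, ENNReal.ofReal |w n x| with hG
  have hGmeas : Measurable G := Measurable.iSup fun n => ((hw n).abs).ennreal_ofReal
  by_contra hcon
  rw [ae_iff] at hcon
  set E : Set (Set.Icc (0:ℝ) 1) := {x | G x = ∞} with hE
  have hEeq : {x | ¬ G x ≠ ∞} = E := by ext x; simp [hE]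
  rw [hEeq] at hcon
  have hEmeas : MeasurableSet E := hGmeas (measurableSet_singleton ∞)
  have hEfin : μ E ≠ ∞ := measure_ne_top μ E
  set c : ℕ → ℝ := fun k => ((k:ℝ)+2)^2 with hc
  set T : ℕ → ℕ → Set (Set.Icc (0:ℝ) 1) := fun k N => {x | ∃ n ≤ N, c k ≤ |w n x|} with hT
  have hTmeas : ∀ k N, MeasurableSet (T k N) := by
    intro k N
    have : T k N = ⋃ n, ⋃ (_ : n ≤ N), {x | c k ≤ |w n x|} := by
      ext x; simp [hT]
    rw [this]
    exact MeasurableSet.iUnion fun n => MeasurableSet.iUnion fun _ =>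
      measurableSet_le measurable_const (hw n).abs
  have hTmono : ∀ k, Monotone (T k) := by
    intro k N1 N2 h x hx
    obtain ⟨n, hn, hcn⟩ := hx
    exact ⟨n, hn.trans h, hcn⟩
  have hsub : ∀ k, E ⊆ ⋃ N, T k N := by
    intro k x hx
    have hlt : ENNReal.ofReal (c k) < G x := by
      rw [hx]; exact ENNReal.ofReal_lt_top
    rw [hG, lt_iSup_iff] at hlt
    obtain ⟨n, hn⟩ := hlt
    have : c k ≤ |w n x| := by
      by_contra hcc
      push_neg at hcc
      exact absurd (ENNReal.ofReal_le_ofReal hcc.le) (not_le.2 hn)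
    exact Set.mem_iUnion.2 ⟨n, ⟨n, le_refl n, this⟩⟩
  -- choose N k
  have hN : ∀ k : ℕ, ∃ N, μ (E \ T k N) < μ E * (2⁻¹)^(k+2) := by
    intro k
    have hanti : Antitone (fun N => E \ T k N) := fun N1 N2 h =>
      Set.diff_subset_diff_right (hTmono k h)
    have hiInter : ⋂ N, (E \ T k N) = ∅ := by
      rw [← Set.diff_iUnion]
      exact Set.diff_eq_empty.2 (hsub k)
    have htend : Tendsto (fun N => μ (E \ T k N)) atTop (𝓝 (μ (⋂ N, (E \ T k N)))) := by
      apply tendsto_measure_iInter_atTop (fun N => (hEmeas.diff (hTmeas k N)).nullMeasurableSet) hanti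
      exact ⟨0, measure_ne_top μ _⟩
    rw [hiInter, measure_empty] at htend
    have hpos : (0:ENNReal) < μ E * (2⁻¹)^(k+2) := by
      exact ENNReal.mul_pos hcon (by simp)
    exact (htend.eventually (gt_mem_nhds hpos)).exists
  choose N hNlt using hN
  set F : Set (Set.Icc (0:ℝ) 1) := E \ ⋃ k, (E \ T k (N k)) with hF
  have hFne : μ F ≠ 0 := by
    intro h0
    have hU : μ (⋃ k, (E \ T k (N k))) ≤ μ E * 2⁻¹ := by
      calc μ (⋃ k, (E \ T k (N k))) ≤ ∑' k, μ (E \ T k (N k)) := measure_iUnion_le _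
        _ ≤ ∑' k, μ E * (2⁻¹)^(k+2) := ENNReal.tsum_le_tsum fun k => (hNlt k).le
        _ = μ E * (2⁻¹)^2 * ∑' k, (2⁻¹)^k := by
            rw [← ENNReal.tsum_mul_left]
            congr 1; ext k; ring
        _ = μ E * (2⁻¹)^2 * 2 := by
            rw [ENNReal.tsum_geometric]
            congr 1
            rw [ENNReal.one_sub_inv_two, inv_inv]
        _ ≤ μ E * 2⁻¹ := by
            rw [mul_assoc]
            gcongr
            rw [pow_two, mul_assoc, ENNReal.inv_mul_cancel (by norm_num) (by norm_num), mul_one]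
    have hEle : μ E ≤ μ F + μ (⋃ k, (E \ T k (N k))) := by
      refine (measure_mono ?_).trans (measure_union_le _ _)
      intro x hx
      by_cases hxx : x ∈ ⋃ k, (E \ T k (N k))
      · exact Or.inr hxx
      · exact Or.inl ⟨hx, hxx⟩
    rw [h0, zero_add] at hEle
    have : μ E ≤ μ E * 2⁻¹ := hEle.trans hU
    have hhalf : μ E * 2⁻¹ < μ E := by
      have := ENNReal.half_lt_self hcon hEfin
      rwa [ENNReal.div_eq_inv_mul, mul_comm] at this
    exact absurd this (not_le.2 hhalf)
  have hFkey : ∀ x ∈ F, ∀ k : ℕ, ∃ n ≤ N k, c k ≤ |w n x| := by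
    intro x hx k
    have hxE : x ∈ E := hx.1
    have hnot : x ∉ E \ T k (N k) := fun hc' => hx.2 (Set.mem_iUnion.2 ⟨k, hc'⟩)
    by_contra h
    exact hnot ⟨hxE, fun hT' => h hT'⟩
  set M : ℕ → ℕ := fun k => k + ∑ j ∈ Finset.range (k+1), N j with hM
  have hMmono : StrictMono M := by
    apply strictMono_nat_of_lt_succ
    intro k
    have : ∑ j ∈ Finset.range (k+1), N j ≤ ∑ j ∈ Finset.range (k+1+1), N j :=
      Finset.sum_le_sum_of_subset (Finset.range_subset_range.2 (by omega))
    simp only [hM]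
    omega
  have hNM : ∀ k, N k ≤ M k := by
    intro k
    have : N k ≤ ∑ j ∈ Finset.range (k+1), N j :=
      Finset.single_le_sum (fun i _ => Nat.zero_le _) (Finset.self_mem_range_succ k)
    simp only [hM]
    omega
  have hselfM : ∀ k, k ≤ M k := fun k => Nat.le_add_right _ _
  have hFkey' : ∀ x ∈ F, ∀ k : ℕ, ∃ n ≤ M k, c k ≤ |w n x| := by
    intro x hx k
    obtain ⟨n, hn, h⟩ := hFkey x hx k
    exact ⟨n, hn.trans (hNM k), h⟩
  set cnt : ℕ → ℕ := fun n => ((Finset.range (n+1)).filter (fun j => M j ≤ n)).card with hcnt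
  set a : ℕ → ℝ := fun n => ((cnt n : ℝ) + 1)⁻¹ with ha
  have hcnt_tendsto : Tendsto cnt atTop atTop := by
    rw [tendsto_atTop_atTop]
    intro b
    refine ⟨M b, fun n hn => ?_⟩
    have hsub2 : Finset.range b ⊆ (Finset.range (n+1)).filter (fun j => M j ≤ n) := by
      intro j hj
      rw [Finset.mem_range] at hj
      have hMj : M j ≤ n := le_trans (hMmono.le_iff_le.2 hj.le) hn
      have hjMj : j ≤ M j := hselfM j
      rw [Finset.mem_filter, Finset.mem_range]
      exact ⟨by omega, hMj⟩
    calc b = (Finset.range b).card := (Finset.card_range b).symm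
      _ ≤ _ := Finset.card_le_card hsub2
  have ha0 : Tendsto a atTop (𝓝 0) := by
    apply Tendsto.inv_tendsto_atTop
    have h1 : Tendsto (fun n => (cnt n : ℝ)) atTop atTop :=
      tendsto_natCast_atTop_atTop.comp hcnt_tendsto
    exact tendsto_atTop_add_const_right _ 1 h1
  have hae := H a ha0
  have hex : ∃ x, x ∈ F ∧ Tendsto (fun n => a n * w n x) atTop (𝓝 (0:ℝ)) := by
    by_contra h
    push_neg at h
    exact hFne (measure_mono_null (fun x hx => h x hx) (ae_iff.1 hae))
  obtain ⟨x, hxF, htend⟩ := hex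
  have hfreq : ∀ m : ℕ, ∃ n, m < n ∧ 1 ≤ |a n * w n x| := by
    intro m
    set C : ℝ := Finset.sup' (Finset.range (m+1)) ⟨0, by simp⟩ (fun n => |w n x|) with hC
    set k : ℕ := ⌈C⌉₊ with hk
    obtain ⟨n, hnM, hcn⟩ := hFkey' x hxF k
    have hCk : C < c k := by
      have h1 : C ≤ (k:ℝ) := Nat.le_ceil C
      have h2 : (k:ℝ) < ((k:ℝ)+2)^2 := by nlinarith [(Nat.cast_nonneg k : (0:ℝ) ≤ (k:ℝ))]
      simp only [hc]
      linarith
    have hmn : m < n := by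
      by_contra h
      push_neg at h
      have : |w n x| ≤ C := Finset.le_sup' (fun j => |w j x|) (Finset.mem_range.2 (by omega))
      linarith
    refine ⟨n, hmn, ?_⟩
    have hcntle : cnt n ≤ k + 1 := by
      have hsub3 : (Finset.range (n+1)).filter (fun j => M j ≤ n) ⊆ Finset.range (k+1) := by
        intro j hj
        rw [Finset.mem_filter] at hj
        rw [Finset.mem_range]
        have h1 : M j ≤ M k := hj.2.trans hnM
        have := hMmono.le_iff_le.1 h1
        omega
      calc cnt n ≤ (Finset.range (k+1)).card := Finset.card_le_card hsub3
        _ = k+1 := Finset.card_range _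
    have hapos : (0:ℝ) < a n := by
      simp only [ha]
      positivity
    have hage : ((k:ℝ)+2)⁻¹ ≤ a n := by
      simp only [ha]
      apply inv_anti₀ (by positivity)
      have : (cnt n : ℝ) ≤ (k:ℝ) + 1 := by exact_mod_cast hcntle
      linarith
    have hmul : ((k:ℝ)+2)⁻¹ * c k ≤ a n * |w n x| :=
      mul_le_mul hage hcn (by simp only [hc]; positivity) hapos.le
    rw [abs_mul, abs_of_pos hapos]
    have heq2 : ((k:ℝ)+2)⁻¹ * c k = (k:ℝ)+2 := by
      simp only [hc]
      field_simp
    have : (1:ℝ) ≤ ((k:ℝ)+2)⁻¹ * c k := by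
      rw [heq2]
      linarith [(Nat.cast_nonneg k : (0:ℝ) ≤ (k:ℝ))]
    linarith
  have hev : ∀ᶠ n in atTop, |a n * w n x| < 1 := by
    have h1 : Tendsto (fun n => |a n * w n x|) atTop (𝓝 (0:ℝ)) := by
      simpa using htend.abs
    exact h1.eventually_lt_const one_pos
  rw [eventually_atTop] at hev
  obtain ⟨m, hm⟩ := hev
  obtain ⟨n, hmn, h1n⟩ := hfreq m
  exact absurd (hm n hmn.le) (not_lt.2 h1n)

theorem stmt17 (B : Set ((Set.Icc (0:ℝ) 1) → ℝ)) (hB : ∀ f ∈ B, Measurable f) :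
    (∀ f : ℕ → (Set.Icc (0:ℝ) 1) → ℝ, (∀ n, f n ∈ B) →
      ∀ a : ℕ → ℝ, Tendsto a atTop (𝓝 0) →
        ∀ᵐ x ∂volume, Tendsto (fun n => a n * f n x) atTop (𝓝 (0:ℝ))) ↔
    (∃ g : (Set.Icc (0:ℝ) 1) → ℝ, Measurable g ∧ (∀ x, 0 ≤ g x) ∧
      ∀ f ∈ B, ∀ᵐ x ∂volume, |f x| ≤ g x) := by
  constructor
  · intro H
    by_cases hBne : B.Nonempty
    swap
    · refine ⟨fun _ => 0, measurable_const, fun x => le_refl 0, fun f hf => absurd ⟨f, hf⟩ hBne⟩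
    obtain ⟨f₀, hf₀⟩ := hBne
    set V := {v : ℕ → (Set.Icc (0:ℝ) 1) → ℝ // ∀ n, v n ∈ B} with hV
    haveI : Nonempty V := ⟨⟨fun _ => f₀, fun _ => hf₀⟩⟩
    set Gf : V → (Set.Icc (0:ℝ) 1) → ENNReal := fun v x => ⨆ n, ENNReal.ofReal |v.1 n x| with hGf
    have hGfmeas : ∀ v : V, Measurable (Gf v) :=
      fun v => Measurable.iSup fun n => ((hB _ (v.2 n)).abs).ennreal_ofReal
    set J : V → ENNReal := fun v => ∫⁻ x, phi (Gf v x) ∂(volume : Measure (Set.Icc (0:ℝ) 1)) with hJ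
    have hJfin : ∀ v, J v ≠ ⊤ := by
      intro v
      have : J v ≤ 1 := by
        calc J v ≤ ∫⁻ _, 1 ∂(volume : Measure (Set.Icc (0:ℝ) 1)) := lintegral_mono fun x => phi_le_one _
          _ = (volume : Measure (Set.Icc (0:ℝ) 1)) Set.univ := by simp
          _ = 1 := measure_univ
      exact (this.trans_lt (by norm_num)).ne
    -- sequence attaining the sup
    obtain ⟨u, hu_mono, hu_tendsto, hu_mem⟩ :=
      exists_seq_tendsto_sSup (Set.range_nonempty J) (OrderTop.bddAbove _)
    choose vk hvk using fun k => (hu_mem k : u k ∈ Set.range J)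
    set w : ℕ → (Set.Icc (0:ℝ) 1) → ℝ := fun m => (vk (Nat.unpair m).1).1 (Nat.unpair m).2 with hw
    have hwB : ∀ m, w m ∈ B := fun m => (vk _).2 _
    set wV : V := ⟨w, hwB⟩ with hwV
    have hGfge : ∀ k, ∀ x, Gf (vk k) x ≤ Gf wV x := by
      intro k x
      apply iSup_le
      intro n
      refine le_iSup_of_le (Nat.pair k n) ?_
      simp [hGf, hwV, hw, Nat.unpair_pair]
    have hJtop : ∀ v : V, J v ≤ J wV := by
      have hsup : sSup (Set.range J) ≤ J wV := by
        apply le_of_tendsto hu_tendsto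
        filter_upwards with k
        rw [← hvk k]
        exact lintegral_mono fun x => phi_mono (hGfge k x)
      intro v
      exact le_trans (le_sSup (Set.mem_range_self v)) hsup
    -- a.e. finiteness
    have hfin : ∀ᵐ x ∂(volume : Measure (Set.Icc (0:ℝ) 1)), Gf wV x ≠ ⊤ :=
      pieceA w (fun n => hB _ (hwB n)) (fun a ha => H w hwB a ha)
    -- maximality
    have hmax : ∀ f ∈ B, ∀ᵐ x ∂(volume : Measure (Set.Icc (0:ℝ) 1)), ENNReal.ofReal |f x| ≤ Gf wV x := by
      intro f hf
      set w' : ℕ → (Set.Icc (0:ℝ) 1) → ℝ := fun m => Nat.rec f (fun n _ => w n) m with hw'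
      have hw'B : ∀ m, w' m ∈ B := by
        intro m
        cases m with
        | zero => exact hf
        | succ n => exact hwB n
      set w'V : V := ⟨w', hw'B⟩ with hw'V
      have hG' : ∀ x, Gf w'V x = (ENNReal.ofReal |f x|) ⊔ (Gf wV x) := by
        intro x
        apply le_antisymm
        · apply iSup_le
          intro m
          cases m with
          | zero => exact le_sup_left
          | succ n => exact le_trans (le_iSup (fun n => ENNReal.ofReal |w n x|) n) le_sup_right
        · apply sup_le
          · exact le_iSup_of_le 0 le_rfl
          · exact iSup_le fun n => le_iSup_of_le (n+1) le_rfl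
      have hle : ∀ x, Gf wV x ≤ Gf w'V x := fun x => (hG' x).symm ▸ le_sup_right
      have hJeq : J w'V = J wV :=
        le_antisymm (hJtop w'V) (lintegral_mono fun x => phi_mono (hle x))
      have hmeas1 : Measurable (fun x => phi (Gf wV x)) := phi_measurable.comp (hGfmeas wV)
      have hmeas2 : Measurable (fun x => phi (Gf w'V x)) := phi_measurable.comp (hGfmeas w'V)
      have hsub : ∫⁻ x, (phi (Gf w'V x) - phi (Gf wV x)) ∂(volume : Measure (Set.Icc (0:ℝ) 1)) = J w'V - J wV := by
        apply lintegral_sub hmeas1 (hJfin wV)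
        filter_upwards with x
        exact phi_mono (hle x)
      rw [hJeq, tsub_self] at hsub
      have hae0 : ∀ᵐ x ∂(volume : Measure (Set.Icc (0:ℝ) 1)), phi (Gf w'V x) - phi (Gf wV x) = 0 :=
        (lintegral_eq_zero_iff (hmeas2.sub hmeas1)).1 hsub
      filter_upwards [hae0] with x hx
      have hphile : phi (Gf w'V x) ≤ phi (Gf wV x) := tsub_eq_zero_iff_le.1 hx
      have hphieq : phi (Gf w'V x) = phi (Gf wV x) :=
        le_antisymm hphile (phi_mono (hle x))
      have hGeq : Gf w'V x = Gf wV x := phi_inj hphieq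
      rw [← hGeq, hG' x]
      exact le_sup_left
    refine ⟨fun x => (Gf wV x).toReal, (hGfmeas wV).ennreal_toReal,
      fun x => ENNReal.toReal_nonneg, ?_⟩
    intro f hf
    filter_upwards [hmax f hf, hfin] with x h1 h2
    exact (ENNReal.ofReal_le_iff_le_toReal h2).1 h1
  · rintro ⟨g, hg, hg0, hdom⟩ f hf a ha
    have h : ∀ᵐ x ∂(volume : Measure (Set.Icc (0:ℝ) 1)), ∀ n, |f n x| ≤ g x :=
      (ae_all_iff).2 fun n => hdom (f n) (hf n)
    filter_upwards [h] with x hx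
    have hb : Tendsto (fun n => |a n| * g x) atTop (𝓝 (0 : ℝ)) := by
      simpa using (ha.abs).mul_const (g x)
    apply squeeze_zero_norm _ hb
    intro n
    rw [Real.norm_eq_abs, abs_mul]
    exact mul_le_mul_of_nonneg_left (hx n) (abs_nonneg _)
end

section
/- With G and F as in the context: (a) F is continuous on ℝ; (b) F belongs to L², i.e. MemLp F 2 with respect to the volume measure on ℝ; and (c) there exists a real number L such that ∫_{−R}^{R} ‖F(x)‖² dx → L as R → ∞ (the limit of the interval integrals of the continuous function ‖F‖² exists, i.e. ‖F‖² is improperly Riemann integrable on ℝ). -/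
/-!
For `G ∈ L²` supported in `[0, 1]` and fixed `t`, the numbers `𝓕⁻ G (t - n)`, `n ∈ ℤ`, are the
Fourier coefficients of `ξ ↦ 𝐞 (ξ t) G ξ` on `(0, 1]`. Parseval's identity on the circle gives
`∑ₙ ‖𝓕⁻ G (t + n)‖² = ‖G‖₂²` for every `t`, and integrating over `t ∈ (0, 1]` tiles the line, so
`‖𝓕⁻ G‖₂ = ‖G‖₂`. The limit of the integrals over `[-R, R]` is then the integral over `ℝ`.
-/

open MeasureTheory Filter Topology Real
open Set Function FourierTransform

theorem intervalIntegral.integral_eq_integral_of_support_subset_Icc {E : Type*}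
    [NormedAddCommGroup E] [NormedSpace ℝ E] {f : ℝ → E} {a b : ℝ} (hab : a ≤ b)
    (hf : support f ⊆ Icc a b) :
    ∫ x in a..b, f x = ∫ x, f x := by
  rw [intervalIntegral.integral_of_le hab, ← integral_Icc_eq_integral_Ioc,
    setIntegral_eq_integral_of_forall_compl_eq_zero fun x hx => notMem_support.1 (hx <| hf ·)]

theorem lintegral_eq_setLIntegral_Ioc_tsum_add_int {f : ℝ → ENNReal} (hf : Measurable f) :
    ∫⁻ x, f x = ∫⁻ y in Ioc 0 1, ∑' n : ℤ, f (y + n) := by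
  have hcast : Injective fun n : ℤ => (⟨n, AddSubgroup.intCast_mem_zmultiples_one n⟩ :
      AddSubgroup.zmultiples (1 : ℝ)) := fun m n h => by simpa using congrArg Subtype.val h
  have hmeas (n : ℤ) : AEMeasurable (fun y => f (y + n)) (volume.restrict (Ioc 0 1)) :=
    (hf.comp (measurable_add_const _)).aemeasurable
  rw [(isAddFundamentalDomain_Ioc one_pos 0 volume).lintegral_eq_tsum'' f, zero_add,
    ← hcast.tsum_eq, lintegral_tsum hmeas]
  · simp [add_comm]
  · rintro ⟨x, hx⟩ -
    obtain ⟨n, rfl⟩ := AddSubgroup.mem_zmultiples_iff.1 hx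
    exact ⟨n, by simp⟩

theorem MeasureTheory.MemLp.integrable_of_support_subset_Icc {G : ℝ → ℂ} (hG : MemLp G 2)
    {a b : ℝ} (hsupp : support G ⊆ Icc a b) : Integrable G :=
  (integrableOn_iff_integrable_of_support_subset hsupp).1 ((hG.restrict _).integrable one_le_two)

theorem Real.continuous_fourierInv {G : ℝ → ℂ} (hG : Integrable G) : Continuous (𝓕⁻ G) := by
  simpa using (Lp.fourierTransformInv (memLp_one_iff_integrable.2 hG).toLp).continuous

section SupportedInUnitInterval

variable {G : ℝ → ℂ}

theorem fourierCoeffOn_fourierChar_smul_eq_fourierInv (hG : support G ⊆ Icc 0 1) (t : ℝ)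
    (n : ℤ) : fourierCoeffOn zero_lt_one (fun ξ => 𝐞 (ξ * t) • G ξ) n = 𝓕⁻ G (t - n) := by
  rw [fourierCoeffOn_eq_integral, Real.fourierInv_eq,
    intervalIntegral.integral_eq_integral_of_support_subset_Icc zero_le_one]
  · simp only [sub_zero, div_one, one_smul, inner_apply]
    refine integral_congr_ae (.of_forall fun ξ => ?_)
    simp only [fourier_coe_apply, Circle.smul_def, Real.fourierChar_apply, smul_eq_mul]
    rw [← mul_assoc, ← Complex.exp_add]
    push_cast
    ring_nf
  · exact fun ξ hξ => hG fun h => hξ (by simp [h])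

theorem hasSum_sq_norm_fourierInv_add_int (hG : MemLp G 2) (hsupp : support G ⊆ Icc 0 1)
    (t : ℝ) : HasSum (fun n : ℤ => ‖𝓕⁻ G (t + n)‖ ^ 2) (∫ ξ, ‖G ξ‖ ^ 2) := by
  have hmodulated : MemLp (fun ξ => 𝐞 (ξ * t) • G ξ) 2 (volume.restrict (Ioc 0 1)) := by
    refine hG.restrict _ |>.of_le ?_ (.of_forall fun ξ => by simp)
    exact ((Real.continuous_fourierChar.comp (continuous_mul_const t)).aestronglyMeasurable).smul
      hG.aestronglyMeasurable.restrict
  have hparseval := hasSum_sq_fourierCoeffOn zero_lt_one hmodulated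
  simp only [fourierCoeffOn_fourierChar_smul_eq_fourierInv hsupp, sub_zero, inv_one, one_smul,
    Circle.norm_smul] at hparseval
  rw [intervalIntegral.integral_eq_integral_of_support_subset_Icc zero_le_one
    fun ξ hξ => hsupp fun h => hξ (by simp [h])] at hparseval
  simpa [comp_def] using (Equiv.neg ℤ).hasSum_iff.2 hparseval

theorem lintegral_ofReal_sq_norm_fourierInv (hG : MemLp G 2) (hsupp : support G ⊆ Icc 0 1) :
    ∫⁻ x, ENNReal.ofReal (‖𝓕⁻ G x‖ ^ 2) = ENNReal.ofReal (∫ ξ, ‖G ξ‖ ^ 2) := by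
  have hcont := Real.continuous_fourierInv (hG.integrable_of_support_subset_Icc hsupp)
  have hmeas : Measurable fun x => ENNReal.ofReal (‖𝓕⁻ G x‖ ^ 2) := by fun_prop
  have hperiodized (y : ℝ) : ∑' n : ℤ, ENNReal.ofReal (‖𝓕⁻ G (y + n)‖ ^ 2) =
      ENNReal.ofReal (∫ ξ, ‖G ξ‖ ^ 2) := by
    have h := hasSum_sq_norm_fourierInv_add_int hG hsupp y
    rw [← ENNReal.ofReal_tsum_of_nonneg (fun n => sq_nonneg _) h.summable, h.tsum_eq]
  rw [lintegral_eq_setLIntegral_Ioc_tsum_add_int hmeas]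
  simp only [hperiodized]
  simp

theorem memLp_two_fourierInv (hG : MemLp G 2) (hsupp : support G ⊆ Icc 0 1) :
    MemLp (𝓕⁻ G) 2 := by
  have hcont := Real.continuous_fourierInv (hG.integrable_of_support_subset_Icc hsupp)
  rw [memLp_two_iff_integrable_sq_norm hcont.aestronglyMeasurable]
  refine ⟨(hcont.norm.pow 2).aestronglyMeasurable, ?_⟩
  rw [hasFiniteIntegral_iff_ofReal (.of_forall fun x => sq_nonneg _),
    lintegral_ofReal_sq_norm_fourierInv hG hsupp]
  exact ENNReal.ofReal_lt_top

end SupportedInUnitInterval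

theorem stmt18_general (q : ℕ → ℝ)
    (ℓ : ℝ)
    (I : ℕ → Set ℝ)
    (hI : ∀ j, I j = Set.Icc (0:ℝ) 1 ∩ Set.Ioo (q j - ℓ / 2 ^ (j + 1)) (q j + ℓ / 2 ^ (j + 1)))
    (A : Set ℝ) (hA : A = ⋃ j ∈ {j : ℕ | 1 ≤ j}, I j)
    (G : ℝ → ℂ) (hG : G = Set.indicator A (fun _ => (1:ℂ)))
    (F : ℝ → ℂ) (hF : F = FourierTransformInv.fourierInv G) :
    Continuous F ∧ MemLp F 2 (volume : Measure ℝ) ∧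
    ∃ L : ℝ, Tendsto (fun R : ℝ => ∫ x in (-R)..R, ‖F x‖ ^ 2) atTop (𝓝 L) := by
  have hAm : MeasurableSet A := by
    rw [hA]
    exact .biUnion (to_countable _) fun j _ => hI j ▸ measurableSet_Icc.inter measurableSet_Ioo
  have hAsub : A ⊆ Icc 0 1 := by
    rw [hA]
    exact iUnion₂_subset fun j _ => hI j ▸ inter_subset_left
  have hsupp : support G ⊆ Icc 0 1 := hG ▸ support_indicator_subset.trans hAsub
  have hG₂ : MemLp G 2 := hG ▸ memLp_indicator_const 2 hAm 1
    (Or.inr (measure_mono hAsub |>.trans_lt (by simp)).ne)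
  have hF₂ : MemLp F 2 := hF ▸ memLp_two_fourierInv hG₂ hsupp
  refine ⟨hF ▸ Real.continuous_fourierInv (hG₂.integrable_of_support_subset_Icc hsupp), hF₂,
    ∫ x, ‖F x‖ ^ 2, ?_⟩
  exact intervalIntegral_tendsto_integral (hF₂.integrable_norm_pow two_ne_zero)
    tendsto_neg_atTop_atBot tendsto_id

theorem stmt18 (q : ℕ → ℝ)
    (hq : Set.BijOn q {n : ℕ | 1 ≤ n} (Set.Icc (0:ℝ) 1 ∩ Set.range ((↑) : ℚ → ℝ)))
    (ℓ : ℝ) (hℓ : ℓ ∈ Set.Ioo (0:ℝ) 1)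
    (I : ℕ → Set ℝ)
    (hI : ∀ j, I j = Set.Icc (0:ℝ) 1 ∩ Set.Ioo (q j - ℓ / 2 ^ (j + 1)) (q j + ℓ / 2 ^ (j + 1)))
    (A : Set ℝ) (hA : A = ⋃ j ∈ {j : ℕ | 1 ≤ j}, I j)
    (G : ℝ → ℂ) (hG : G = Set.indicator A (fun _ => (1:ℂ)))
    (F : ℝ → ℂ) (hF : F = FourierTransformInv.fourierInv G) :
    Continuous F ∧ MemLp F 2 (volume : Measure ℝ) ∧
    ∃ L : ℝ, Tendsto (fun R : ℝ => ∫ x in (-R)..R, ‖F x‖ ^ 2) atTop (𝓝 L) :=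
  stmt18_general q ℓ I hI A hA G hG F hF
end
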